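/- arXiv:2304.04288 — 3 statements merged into one kernel-verified Lean document; each statement's English description precedes it below -/
import Mathlib

section
/- For every n ≥ 3, the distance matrix of the enhanced power graph of the dihedral group D_{2n} is non-singular. -/
open Polynomial

/-- The enhanced power graph of a group `G`: distinct `a`, `b` are adjacent iff
they lie in a common cyclic subgroup. -/
def enhancedPowerGraph (G : Type*) [Group G] : SimpleGraph G where
  Adj a b := a ≠ b ∧ ∃ c : G, a ∈ Subgroup.zpowers c ∧ b ∈ Subgroup.zpowers c
  symm := ⟨by rintro a b ⟨h, c, ha, hb⟩; exact ⟨h.symm, c, hb, ha⟩⟩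
  loopless := ⟨by rintro a ⟨h, _⟩; exact h rfl⟩

/-- The power graph of a group `G`: distinct `a`, `b` are adjacent iff
one is a power of the other. -/
def powerGraph (G : Type*) [Group G] : SimpleGraph G where
  Adj a b := a ≠ b ∧ (a ∈ Subgroup.zpowers b ∨ b ∈ Subgroup.zpowers a)
  symm := ⟨by rintro a b ⟨h, hc⟩; exact ⟨h.symm, hc.symm⟩⟩
  loopless := ⟨by rintro a ⟨h, _⟩; exact h rfl⟩

/-- The distance matrix of a graph, with real entries. -/
noncomputable def distMatrix {V : Type*} (Γ : SimpleGraph V) : Matrix V V ℝ :=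
  fun u v => (Γ.dist u v : ℝ)

/-- The elementary abelian group `El(p^n) = (ℤ/p)^n`, written multiplicatively. -/
abbrev El (p n : ℕ) : Type := Multiplicative (Fin n → ZMod p)

/-! In the enhanced power graph of `D_{2n}` the rotations form a clique, the identity is
adjacent to every element, and there are no other edges; so all distances are `0`, `1` or `2`.
A vector `v` in the kernel of the distance matrix is therefore constant on the reflections and on
the non-identity rotations, and summing the kernel equations leaves a `2 × 2` linear system for
`A = ∑ v (r i)` and `B = ∑ v (sr i)` with determinant `-(n² + 2n - 2) ≠ 0`. -/

theorem Fintype.sum_ite_eq_mul {ι R : Type*} [Fintype ι] [DecidableEq ι] [CommRing R] (i : ι)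
    (a c : R) (f : ι → R) :
    ∑ j, (if i = j then a else c) * f j = c * ∑ j, f j + (a - c) * f i := by
  have h (j : ι) :
      (if i = j then a else c) * f j = c * f j + if i = j then (a - c) * f j else 0 := by
    split_ifs <;> ring
  simp only [h, Finset.sum_add_distrib, ← Finset.mul_sum, Fintype.sum_ite_eq]

namespace SimpleGraph

variable {V : Type*} {G : SimpleGraph V} {u v w : V}

theorem dist_eq_two_of_adj_of_adj (huv : u ≠ v) (hn : ¬ G.Adj u v) (hu : G.Adj u w)
    (hv : G.Adj w v) : G.dist u v = 2 := by
  rw [dist, edist_eq_two_iff.mpr ⟨huv, hn, w, hu, hv.symm⟩]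
  rfl

end SimpleGraph

namespace DihedralGroup

open SimpleGraph Matrix

variable {n : ℕ}

theorem exists_eq_r_of_mem_zpowers_r {x : DihedralGroup n} {k : ZMod n}
    (h : x ∈ Subgroup.zpowers (r k)) : ∃ m, x = r m := by
  obtain ⟨z, rfl⟩ := h
  exact ⟨_, r_zpow k z⟩

theorem eq_one_or_eq_sr_of_mem_zpowers_sr {x : DihedralGroup n} {k : ZMod n}
    (h : x ∈ Subgroup.zpowers (sr k)) : x = 1 ∨ x = sr k := by
  classical
  have hfin : IsOfFinOrder (sr k) := orderOf_pos_iff.mp (by rw [orderOf_sr]; norm_num)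
  rw [hfin.mem_zpowers_iff_mem_range_orderOf, orderOf_sr] at h
  simpa [Finset.range_add_one, or_comm] using h

theorem r_mem_zpowers_r_one (i : ZMod n) : r i ∈ Subgroup.zpowers (r 1 : DihedralGroup n) :=
  Subgroup.mem_zpowers_iff.mpr ⟨ZMod.cast i, by rw [r_one_zpow, ZMod.intCast_zmod_cast]⟩

theorem enhancedPowerGraph_adj_r_r {i j : ZMod n} :
    (enhancedPowerGraph (DihedralGroup n)).Adj (r i) (r j) ↔ i ≠ j :=
  ⟨fun h hij => h.1 (congrArg r hij),
    fun hij => ⟨by simpa using hij, r 1, r_mem_zpowers_r_one i, r_mem_zpowers_r_one j⟩⟩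

theorem enhancedPowerGraph_adj_r_sr {i j : ZMod n} :
    (enhancedPowerGraph (DihedralGroup n)).Adj (r i) (sr j) ↔ i = 0 := by
  constructor
  · rintro ⟨-, (c | c), hr, hsr⟩
    · obtain ⟨m, hm⟩ := exists_eq_r_of_mem_zpowers_r hsr
      cases hm
    · rcases eq_one_or_eq_sr_of_mem_zpowers_sr hr with h | h
      · rw [one_def, r.injEq] at h
        exact h
      · cases h
  · rintro rfl
    exact ⟨nofun, sr j, r_zero (n := n) ▸ (Subgroup.zpowers _).one_mem,
      Subgroup.mem_zpowers _⟩

theorem enhancedPowerGraph_not_adj_sr_sr {i j : ZMod n} :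
    ¬ (enhancedPowerGraph (DihedralGroup n)).Adj (sr i) (sr j) := by
  rintro ⟨hij, (c | c), hi, hj⟩
  · obtain ⟨m, hm⟩ := exists_eq_r_of_mem_zpowers_r hi
    cases hm
  · rcases eq_one_or_eq_sr_of_mem_zpowers_sr hi with h | hi
    · rw [one_def] at h
      cases h
    rcases eq_one_or_eq_sr_of_mem_zpowers_sr hj with h | hj
    · rw [one_def] at h
      cases h
    · exact hij (hi.trans hj.symm)

theorem sum_eq_sum_r_add_sum_sr [NeZero n] {M : Type*} [AddCommMonoid M]
    (f : DihedralGroup n → M) :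
    ∑ x, f x = ∑ i, f (r i) + ∑ i, f (sr i) :=
  (equivSum.symm.sum_comp f).symm.trans (Fintype.sum_sum_type _)

theorem distMatrix_r_r (i j : ZMod n) :
    distMatrix (enhancedPowerGraph (DihedralGroup n)) (r i) (r j) = if i = j then 0 else 1 := by
  rw [distMatrix]
  split_ifs with h
  · simp [h]
  · simp [dist_eq_one_iff_adj.mpr (enhancedPowerGraph_adj_r_r.mpr h)]

theorem distMatrix_r_sr (i j : ZMod n) :
    distMatrix (enhancedPowerGraph (DihedralGroup n)) (r i) (sr j) = if i = 0 then 1 else 2 := by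
  rw [distMatrix]
  split_ifs with h
  · rw [dist_eq_one_iff_adj.mpr (enhancedPowerGraph_adj_r_sr.mpr h), Nat.cast_one]
  · rw [dist_eq_two_of_adj_of_adj (by nofun) (mt enhancedPowerGraph_adj_r_sr.mp h)
      (enhancedPowerGraph_adj_r_r.mpr h) (enhancedPowerGraph_adj_r_sr.mpr rfl), Nat.cast_ofNat]

theorem distMatrix_sr_r (i j : ZMod n) :
    distMatrix (enhancedPowerGraph (DihedralGroup n)) (sr i) (r j) = if j = 0 then 1 else 2 := by
  rw [← distMatrix_r_sr j i, distMatrix, distMatrix, dist_comm]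

theorem distMatrix_sr_sr (i j : ZMod n) :
    distMatrix (enhancedPowerGraph (DihedralGroup n)) (sr i) (sr j) =
      if i = j then 0 else 2 := by
  rw [distMatrix]
  split_ifs with h
  · simp [h]
  · rw [dist_eq_two_of_adj_of_adj (by simpa using h) enhancedPowerGraph_not_adj_sr_sr
      (enhancedPowerGraph_adj_r_sr.mpr rfl).symm (enhancedPowerGraph_adj_r_sr.mpr rfl),
      Nat.cast_ofNat]

variable [NeZero n]

theorem distMatrix_mulVec_r (v : DihedralGroup n → ℝ) (i : ZMod n) :
    (distMatrix (enhancedPowerGraph (DihedralGroup n)) *ᵥ v) (r i) =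
      ∑ j, v (r j) - v (r i) + (if i = 0 then 1 else 2) * ∑ j, v (sr j) := by
  simp only [mulVec, dotProduct, sum_eq_sum_r_add_sum_sr, distMatrix_r_r, distMatrix_r_sr,
    Fintype.sum_ite_eq_mul, ← Finset.mul_sum]
  ring

theorem distMatrix_mulVec_sr (v : DihedralGroup n → ℝ) (i : ZMod n) :
    (distMatrix (enhancedPowerGraph (DihedralGroup n)) *ᵥ v) (sr i) =
      2 * ∑ j, v (r j) - v (r 0) + 2 * (∑ j, v (sr j) - v (sr i)) := by
  simp only [mulVec, dotProduct, sum_eq_sum_r_add_sum_sr, distMatrix_sr_r, distMatrix_sr_sr,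
    eq_comm (b := (0 : ZMod n)), Fintype.sum_ite_eq_mul]
  ring

theorem eq_zero_of_distMatrix_mulVec_eq_zero {v : DihedralGroup n → ℝ}
    (hv : distMatrix (enhancedPowerGraph (DihedralGroup n)) *ᵥ v = 0) : v = 0 := by
  set A := ∑ j, v (r j)
  set B := ∑ j, v (sr j)
  have hr (i : ZMod n) : v (r i) = A + (if i = 0 then 1 else 2) * B := by
    have := distMatrix_mulVec_r v i
    rw [hv, Pi.zero_apply] at this
    linarith
  have hsr (i : ZMod n) : 2 * v (sr i) = 2 * A - v (r 0) + 2 * B := by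
    have := distMatrix_mulVec_sr v i
    rw [hv, Pi.zero_apply] at this
    linarith
  have hr0 : v (r 0) = A + B := by simpa using hr 0
  have hA : A = n * (A + 2 * B) - B :=
    calc A = ∑ i, (A + (if i = 0 then 1 else 2) * B) := Finset.sum_congr rfl fun i _ => hr i
      _ = n * (A + 2 * B) - B := by
        simp only [Finset.sum_add_distrib, eq_comm (b := (0 : ZMod n)), Fintype.sum_ite_eq_mul,
          Finset.sum_const, Finset.card_univ, ZMod.card, nsmul_eq_mul]
        ring
  have hB : 2 * B = n * (A + B) :=
    calc 2 * B = ∑ i, 2 * v (sr i) := Finset.mul_sum _ _ _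
      _ = ∑ i, (2 * A - v (r 0) + 2 * B) := Finset.sum_congr rfl fun i _ => hsr i
      _ = n * (A + B) := by
        rw [Finset.sum_const, Finset.card_univ, ZMod.card, nsmul_eq_mul, hr0]
        ring
  have hn : (1 : ℝ) ≤ n := Nat.one_le_cast.mpr NeZero.one_le
  have hB0 : B = 0 := by
    have : ((n : ℝ) ^ 2 + 2 * n - 2) * B = 0 := by linear_combination (n - 1) * hB - n * hA
    exact (mul_eq_zero.mp this).resolve_left (by nlinarith)
  have hA0 : A = 0 := by
    have : (n : ℝ) * A = 0 := by linear_combination -hB - (n - 2) * hB0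
    exact (mul_eq_zero.mp this).resolve_left (by positivity)
  ext (i | i)
  · simp [hr, hA0, hB0]
  · have := hsr i
    rw [hr0, hA0, hB0] at this
    simpa using this

end DihedralGroup

theorem stmt6_general (n : ℕ) [NeZero n] :
    (distMatrix (enhancedPowerGraph (DihedralGroup n))).det ≠ 0 := fun hdet =>
  let ⟨_, hv0, hv⟩ := Matrix.exists_mulVec_eq_zero_iff.mpr hdet
  hv0 (DihedralGroup.eq_zero_of_distMatrix_mulVec_eq_zero hv)

theorem stmt6 (n : ℕ) [NeZero n] (hn : 3 ≤ n) :
    (distMatrix (enhancedPowerGraph (DihedralGroup n))).det ≠ 0 :=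
  stmt6_general n
end

section
/- For the dicyclic group Dic_{4n} with n ≥ 3, the characteristic polynomial of the distance matrix of its enhanced power graph is (x+1)^{3n−2}(x+3)^{n−1}(x³ − (6n−5)x² − (8n² + 4n − 7)x − (6n − 3)). In particular this distance matrix is non-singular. -/
open Polynomial

/-!
The identity is adjacent to every vertex of an enhanced power graph, so distances are `0`, `1`
or `2` according to equality, adjacency and non-adjacency. In `Dic_{4n}` the powers of `a` form
a clique, the central elements `1, aⁿ` are adjacent to everything, and the only other neighbour
of `x aⁱ` is `x aⁱ⁺ⁿ`. This gives an explicit basis of `ℝ^{Dic_{4n}}` adapted to the distance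
matrix `D`: the differences `e_g - e_h` of adjacent twins `g, h` (two non-central powers of `a`,
the two central elements, or `x aⁱ, x aⁱ⁺ⁿ`) are `3n - 2` independent eigenvectors for `-1`;
differences of the indicators of two edges `{x aⁱ, x aⁱ⁺ⁿ}` give `n - 1` eigenvectors for `-3`;
and the indicators of the equitable partition {central elements, other powers of `a`, the
`x aⁱ`} span a `D`-invariant subspace on which `D` acts by a `3 × 3` quotient matrix whose
characteristic polynomial is the cubic factor.
-/

open scoped Classical in
theorem SimpleGraph.dist_eq_ite_of_forall_adj {V : Type*} {Γ : SimpleGraph V} {c : V}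
    (hc : ∀ v, v ≠ c → Γ.Adj c v) (u v : V) :
    Γ.dist u v = if u = v then 0 else if Γ.Adj u v then 1 else 2 := by
  split_ifs with huv hadj
  · simp [huv]
  · exact SimpleGraph.dist_eq_one_iff_adj.mpr hadj
  · have hu : u ≠ c := by rintro rfl; exact hadj (hc v (Ne.symm huv))
    have hv : v ≠ c := by rintro rfl; exact hadj (hc u huv).symm
    let w : Γ.Walk u v := .cons (hc u hu).symm (.cons (hc v hv) .nil)
    have hle : Γ.dist u v ≤ 2 := SimpleGraph.dist_le w
    have h0 : Γ.dist u v ≠ 0 := (SimpleGraph.Reachable.dist_eq_zero_iff ⟨w⟩).not.mpr huv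
    have h1 : Γ.dist u v ≠ 1 := SimpleGraph.dist_eq_one_iff_adj.not.mpr hadj
    omega

theorem enhancedPowerGraph_adj_one {G : Type*} [Group G] {g : G} (hg : g ≠ 1) :
    (enhancedPowerGraph G).Adj 1 g :=
  ⟨hg.symm, g, one_mem _, Subgroup.mem_zpowers g⟩

open scoped Classical in
theorem distMatrix_enhancedPowerGraph_apply {G : Type*} [Group G] (u v : G) :
    distMatrix (enhancedPowerGraph G) u v
      = if u = v then 0 else if (enhancedPowerGraph G).Adj u v then 1 else 2 := by
  rw [distMatrix, SimpleGraph.dist_eq_ite_of_forall_adj (fun _ => enhancedPowerGraph_adj_one)]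
  split_ifs <;> simp

theorem Submodule.mem_of_sub_mem_of_sum_mem {K V ι : Type*} [DivisionRing K] [CharZero K]
    [AddCommGroup V] [Module K V] (W : Submodule K V) {v : ι → V} {S : Finset ι} {r : ι}
    (hr : r ∈ S) (hsub : ∀ j ∈ S, v j - v r ∈ W) (hsum : ∑ j ∈ S, v j ∈ W) {j : ι} (hj : j ∈ S) :
    v j ∈ W := by
  have hcard : (S.card : K) • v r ∈ W := by
    have : (S.card : K) • v r = ∑ j ∈ S, v j - ∑ j ∈ S, (v j - v r) := by
      rw [Finset.sum_sub_distrib, Finset.sum_const, sub_sub_cancel, Nat.cast_smul_eq_nsmul]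
    rw [this]
    exact W.sub_mem hsum (W.sum_mem hsub)
  have hvr : v r ∈ W :=
    (W.smul_mem_iff (Nat.cast_ne_zero.mpr (Finset.card_ne_zero_of_mem hr))).mp hcard
  simpa using W.add_mem (hsub j hj) hvr

namespace Matrix

theorem charpoly_eq_of_mulVec_basis {R ι κ : Type*} [CommRing R] [Fintype ι]
    [DecidableEq ι] [Fintype κ] [DecidableEq κ] (M : Matrix ι ι R) (N : Matrix κ κ R)
    (b : Module.Basis κ R (ι → R)) (h : ∀ j, M *ᵥ b j = ∑ i, N i j • b i) :
    M.charpoly = N.charpoly := by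
  have : N.toLin b b = M.toLin' := b.ext fun j => by rw [toLin_self, toLin'_apply, h]
  rw [← charpoly_toLin N b, this, charpoly_toLin']

theorem charpoly_eq_prod_mul_charpoly_of_span {K ι E F : Type*} [Field K] [Fintype ι]
    [DecidableEq ι] [Fintype E] [DecidableEq E] [Fintype F] [DecidableEq F] (M : Matrix ι ι K)
    (b : E ⊕ F → ι → K) (hspan : ⊤ ≤ Submodule.span K (Set.range b))
    (hcard : Fintype.card (E ⊕ F) = Fintype.card ι) (d : E → K) (B : Matrix F F K)
    (hE : ∀ e, M *ᵥ b (.inl e) = d e • b (.inl e))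
    (hF : ∀ f, M *ᵥ b (.inr f) = ∑ g, B g f • b (.inr g)) :
    M.charpoly = (∏ e, (X - C (d e))) * B.charpoly := by
  let bb := basisOfTopLeSpanOfCardEqFinrank b hspan (by simpa using hcard)
  have hbb : ⇑bb = b := coe_basisOfTopLeSpanOfCardEqFinrank _ _ _
  rw [charpoly_eq_of_mulVec_basis M (fromBlocks (diagonal d) 0 0 B) bb,
    charpoly_fromBlocks_zero₁₂, charpoly_diagonal]
  rintro (e | f) <;> simp [hbb, hE, hF, Fintype.sum_sum_type, diagonal_apply]

end Matrix

namespace QuaternionGroup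

open Function Matrix

variable {n : ℕ}

local notation "𝐧" => (n : ZMod (2 * n))
local notation "𝐃" => distMatrix (enhancedPowerGraph (QuaternionGroup n))

theorem natCast_add_natCast : 𝐧 + 𝐧 = 0 := by
  simpa [two_mul] using ZMod.natCast_self (2 * n)

theorem add_natCast_add_natCast (k : ZMod (2 * n)) : k + 𝐧 + 𝐧 = k := by
  rw [add_assoc, natCast_add_natCast, add_zero]

theorem neg_natCast : -𝐧 = 𝐧 := neg_eq_of_add_eq_zero_left natCast_add_natCast

theorem add_natCast_eq_iff {k i : ZMod (2 * n)} : k + 𝐧 = i ↔ k = i + 𝐧 := by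
  constructor <;> rintro rfl <;> simp [add_natCast_add_natCast]

theorem single_apply_add_natCast (i k : ZMod (2 * n)) (x : ℝ) :
    (Pi.single i x : ZMod (2 * n) → ℝ) (k + 𝐧) = (Pi.single (i + 𝐧) x : ZMod (2 * n) → ℝ) k := by
  simp only [Pi.single_apply, add_natCast_eq_iff]

@[simp]
theorem a_eq_one_iff {i : ZMod (2 * n)} : (a i : QuaternionGroup n) = 1 ↔ i = 0 := by
  rw [one_def, a.injEq]

@[simp]
theorem xa_ne_one (i : ZMod (2 * n)) : (xa i : QuaternionGroup n) ≠ 1 := by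
  rw [one_def]
  nofun

theorem exists_a_zpow_eq_a (j : ZMod (2 * n)) (k : ℤ) :
    ∃ m, (a j : QuaternionGroup n) ^ k = a m := by
  induction k using Int.induction_on with
  | zero => exact ⟨0, rfl⟩
  | succ k ih =>
    obtain ⟨m, hm⟩ := ih
    exact ⟨m + j, by rw [_root_.zpow_add_one, hm, a_mul_a]⟩
  | pred k ih =>
    obtain ⟨m, hm⟩ := ih
    exact ⟨m + -j, by rw [_root_.zpow_sub_one, hm, ← a_mul_a]; rfl⟩

theorem xa_notMem_zpowers_a (i j : ZMod (2 * n)) : xa i ∉ Subgroup.zpowers (a j) := by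
  rintro ⟨k, hk⟩
  obtain ⟨m, hm⟩ := exists_a_zpow_eq_a j k
  exact absurd (hm.symm.trans hk) (by simp)

noncomputable def extendA : (ZMod (2 * n) → ℝ) →ₗ[ℝ] QuaternionGroup n → ℝ :=
  ExtendByZero.linearMap ℝ a

noncomputable def extendXA : (ZMod (2 * n) → ℝ) →ₗ[ℝ] QuaternionGroup n → ℝ :=
  ExtendByZero.linearMap ℝ xa

section Extend

variable (f : ZMod (2 * n) → ℝ) (k : ZMod (2 * n))

@[simp]
theorem extendA_apply_a : extendA f (a k) = f k :=
  (show Injective (a : ZMod (2 * n) → QuaternionGroup n) from fun _ _ => a.inj).extend_apply _ _ _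

@[simp]
theorem extendA_apply_xa : extendA f (xa k) = 0 :=
  extend_apply' _ _ _ (by simp)

@[simp]
theorem extendXA_apply_a : extendXA f (a k) = 0 :=
  extend_apply' _ _ _ (by simp)

@[simp]
theorem extendXA_apply_xa : extendXA f (xa k) = f k :=
  (show Injective (xa : ZMod (2 * n) → QuaternionGroup n) from fun _ _ => xa.inj).extend_apply _ _ _

theorem extendA_single : extendA (Pi.single k 1) = Pi.single (a k) (1 : ℝ) := by
  ext (j | j) <;> simp [Pi.single_apply]

theorem extendXA_single : extendXA (Pi.single k 1) = Pi.single (xa k) (1 : ℝ) := by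
  ext (j | j) <;> simp [Pi.single_apply]

end Extend

variable (n) in
def centralIndices : Finset (ZMod (2 * n)) := {0, 𝐧}

theorem mem_centralIndices {k : ZMod (2 * n)} : k ∈ centralIndices n ↔ k = 0 ∨ k = 𝐧 := by
  simp [centralIndices]

theorem one_notMem_centralIndices (hn : 2 ≤ n) : (1 : ZMod (2 * n)) ∉ centralIndices n := by
  have h1 : (1 : ZMod (2 * n)).val = 1 := by
    rw [ZMod.val_one_eq_one_mod, Nat.mod_eq_of_lt (by omega)]
  have hn' : (𝐧).val = n := ZMod.val_natCast_of_lt (by omega)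
  rw [mem_centralIndices, not_or]
  constructor <;> intro h <;> simp [h, hn'] at h1; omega

def pairVec (i : ZMod (2 * n)) : ZMod (2 * n) → ℝ := Pi.single i 1 + Pi.single (i + 𝐧) 1

variable (n) in
noncomputable def cellVec : Fin 3 → QuaternionGroup n → ℝ :=
  ![extendA (fun k => if k ∈ centralIndices n then 1 else 0),
    extendA (fun k => if k ∈ centralIndices n then 0 else 1),
    extendXA 1]

-- Entry `(i, j)` is the sum over the columns in cell `j` of any row of `𝐃` in cell `i`.
variable (n) in
def quotientMatrix : Matrix (Fin 3) (Fin 3) ℝ :=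
  !![1, 2 * n - 2, 2 * n; 2, 2 * n - 3, 4 * n; 2, 4 * n - 4, 4 * n - 3]

variable (n) in
theorem charpoly_quotientMatrix :
    (quotientMatrix n).charpoly = X ^ 3 - C (6 * (n : ℝ) - 5) * X ^ 2
      - C (8 * (n : ℝ) ^ 2 + 4 * n - 7) * X - C (6 * (n : ℝ) - 3) := by
  rw [charpoly, det_fin_three]
  simp [quotientMatrix, map_ofNat C]
  ring

variable [NeZero n]

theorem natCast_ne_zero : 𝐧 ≠ 0 := by
  intro h
  have := ZMod.val_natCast_of_lt (show n < 2 * n by have := NeZero.pos n; omega)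
  rw [h, ZMod.val_zero] at this
  exact NeZero.ne n this.symm

theorem self_ne_add_natCast (k : ZMod (2 * n)) : k ≠ k + 𝐧 :=
  (add_ne_left.mpr natCast_ne_zero).symm

theorem mem_zpowers_a_one (i : ZMod (2 * n)) :
    a i ∈ Subgroup.zpowers (a 1 : QuaternionGroup n) := by
  have : NeZero (2 * n) := ⟨by have := NeZero.ne n; omega⟩
  refine Subgroup.mem_zpowers_iff.mpr ⟨i.val, ?_⟩
  rw [zpow_natCast, a_one_pow, ZMod.natCast_zmod_val]

theorem mem_zpowers_xa_iff {i : ZMod (2 * n)} {g : QuaternionGroup n} :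
    g ∈ Subgroup.zpowers (xa i) ↔ g = 1 ∨ g = a 𝐧 ∨ g = xa i ∨ g = xa (i + 𝐧) := by
  rw [mem_zpowers_iff_mem_range_orderOf, orderOf_xa]
  simp only [Finset.mem_image, Finset.mem_range]
  have h3 : xa i ^ 3 = xa (i + 𝐧) := by
    rw [pow_succ, xa_sq, a_mul_xa, sub_eq_add_neg, neg_natCast]
  constructor
  · rintro ⟨k, hk, rfl⟩
    interval_cases k <;> simp [xa_sq, h3]
  · rintro (rfl | rfl | rfl | rfl)
    exacts [⟨0, by norm_num, pow_zero _⟩, ⟨2, by norm_num, xa_sq i⟩, ⟨1, by norm_num, pow_one _⟩,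
      ⟨3, by norm_num, h3⟩]

theorem sum_univ {M : Type*} [AddCommMonoid M] (F : QuaternionGroup n → M) :
    ∑ g, F g = ∑ i, F (a i) + ∑ i, F (xa i) := by
  let e : ZMod (2 * n) ⊕ ZMod (2 * n) ≃ QuaternionGroup n :=
    { toFun := Sum.elim a xa
      invFun := fun | a i => .inl i | xa i => .inr i
      left_inv := by rintro (_ | _) <;> rfl
      right_inv := by rintro (_ | _) <;> rfl }
  rw [← e.sum_comp, Fintype.sum_sum_type]
  rfl

theorem enhancedPowerGraph_adj_a_a {i j : ZMod (2 * n)} :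
    (enhancedPowerGraph (QuaternionGroup n)).Adj (a i) (a j) ↔ i ≠ j :=
  ⟨fun h => by simpa using h.1,
    fun h => ⟨by simpa, a 1, mem_zpowers_a_one i, mem_zpowers_a_one j⟩⟩

theorem enhancedPowerGraph_adj_a_xa {i j : ZMod (2 * n)} :
    (enhancedPowerGraph (QuaternionGroup n)).Adj (a i) (xa j) ↔ i = 0 ∨ i = 𝐧 := by
  constructor
  · rintro ⟨-, (m | m), hi, hj⟩
    · exact absurd hj (xa_notMem_zpowers_a j m)
    · simpa using mem_zpowers_xa_iff.mp hi
  · intro hi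
    exact ⟨by simp, xa j, mem_zpowers_xa_iff.mpr (by rcases hi with rfl | rfl <;> simp),
      Subgroup.mem_zpowers _⟩

theorem enhancedPowerGraph_adj_xa_xa {i j : ZMod (2 * n)} :
    (enhancedPowerGraph (QuaternionGroup n)).Adj (xa i) (xa j) ↔ j = i + 𝐧 := by
  constructor
  · rintro ⟨hij, (m | m), hi, hj⟩
    · exact absurd hi (xa_notMem_zpowers_a i m)
    · simp only [mem_zpowers_xa_iff, xa_ne_one, reduceCtorEq, xa.injEq, false_or] at hi hj
      rcases hi with rfl | rfl <;> rcases hj with rfl | rfl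
      all_goals first | exact absurd rfl hij | simp [add_natCast_add_natCast]
  · rintro rfl
    refine ⟨?_, xa i, Subgroup.mem_zpowers _, mem_zpowers_xa_iff.mpr (by simp)⟩
    simpa using self_ne_add_natCast i

theorem distMatrix_a_a (i j : ZMod (2 * n)) : 𝐃 (a i) (a j) = if i = j then 0 else 1 := by
  rw [distMatrix_enhancedPowerGraph_apply]
  by_cases h : i = j <;> simp [h, enhancedPowerGraph_adj_a_a]

theorem distMatrix_a_xa (i j : ZMod (2 * n)) :
    𝐃 (a i) (xa j) = if i ∈ centralIndices n then 1 else 2 := by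
  rw [distMatrix_enhancedPowerGraph_apply]
  simp [enhancedPowerGraph_adj_a_xa, mem_centralIndices]

theorem distMatrix_xa_a (i j : ZMod (2 * n)) :
    𝐃 (xa i) (a j) = if j ∈ centralIndices n then 1 else 2 := by
  rw [distMatrix_enhancedPowerGraph_apply]
  simp [SimpleGraph.adj_comm _ (xa i), enhancedPowerGraph_adj_a_xa, mem_centralIndices]

theorem distMatrix_xa_xa (i j : ZMod (2 * n)) :
    𝐃 (xa i) (xa j) = if i = j then 0 else if j = i + 𝐧 then 1 else 2 := by
  rw [distMatrix_enhancedPowerGraph_apply]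
  by_cases h : i = j <;> simp [h, enhancedPowerGraph_adj_xa_xa]

section MulVec

variable (f : ZMod (2 * n) → ℝ) (k : ZMod (2 * n))

theorem distMatrix_mulVec_extendA_apply_a : (𝐃 *ᵥ extendA f) (a k) = ∑ i, f i - f k := by
  have h (i : ZMod (2 * n)) : 𝐃 (a k) (a i) * f i = f i - if k = i then f i else 0 := by
    rw [distMatrix_a_a]; split_ifs <;> simp
  simp only [mulVec, dotProduct, sum_univ, extendA_apply_a, extendA_apply_xa,
    mul_zero, Finset.sum_const_zero, add_zero, h, Finset.sum_sub_distrib, Finset.sum_ite_eq,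
    Finset.mem_univ, if_true]

theorem distMatrix_mulVec_extendA_apply_xa :
    (𝐃 *ᵥ extendA f) (xa k) = 2 * ∑ i, f i - ∑ i ∈ centralIndices n, f i := by
  have h (i : ZMod (2 * n)) :
      𝐃 (xa k) (a i) * f i = 2 * f i - if i ∈ centralIndices n then f i else 0 := by
    rw [distMatrix_xa_a]; split_ifs <;> ring
  simp only [mulVec, dotProduct, sum_univ, extendA_apply_a, extendA_apply_xa,
    mul_zero, Finset.sum_const_zero, add_zero, h, Finset.sum_sub_distrib, Finset.sum_ite_mem,
    Finset.univ_inter, Finset.mul_sum]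

theorem distMatrix_mulVec_extendXA_apply_a :
    (𝐃 *ᵥ extendXA f) (a k) = (if k ∈ centralIndices n then 1 else 2) * ∑ i, f i := by
  simp only [mulVec, dotProduct, sum_univ, extendXA_apply_a, extendXA_apply_xa,
    mul_zero, Finset.sum_const_zero, zero_add, distMatrix_a_xa, Finset.mul_sum]

theorem distMatrix_mulVec_extendXA_apply_xa :
    (𝐃 *ᵥ extendXA f) (xa k) = 2 * ∑ i, f i - 2 * f k - f (k + 𝐧) := by
  have hk := self_ne_add_natCast k
  have h (i : ZMod (2 * n)) : 𝐃 (xa k) (xa i) * f i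
      = 2 * f i - 2 * (if k = i then f i else 0) - (if k + 𝐧 = i then f i else 0) := by
    rw [distMatrix_xa_xa]
    by_cases hi : k = i
    · subst hi; simp [hk.symm]
    · by_cases hi' : i = k + 𝐧
      · subst hi'; simp [hk]; ring
      · simp [hi, hi', eq_comm]
  simp only [mulVec, dotProduct, sum_univ, extendXA_apply_a, extendXA_apply_xa,
    mul_zero, Finset.sum_const_zero, zero_add, h, Finset.sum_sub_distrib, ← Finset.mul_sum,
    Finset.sum_ite_eq, Finset.mem_univ, if_true]

end MulVec

theorem distMatrix_mulVec_extendA_of_sum_eq_zero {f : ZMod (2 * n) → ℝ} (hf : ∑ i, f i = 0)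
    (hfc : ∑ i ∈ centralIndices n, f i = 0) :
    𝐃 *ᵥ extendA f = (-1 : ℝ) • extendA f := by
  ext (k | k) <;>
    simp [distMatrix_mulVec_extendA_apply_a, distMatrix_mulVec_extendA_apply_xa, hf, hfc]

theorem distMatrix_mulVec_extendXA_of_sum_eq_zero {f : ZMod (2 * n) → ℝ} (hf : ∑ i, f i = 0)
    {c : ℝ} (hfn : ∀ k, f (k + 𝐧) = c * f k) :
    𝐃 *ᵥ extendXA f = (-2 - c) • extendXA f := by
  ext (k | k) <;>
    simp [distMatrix_mulVec_extendXA_apply_a, distMatrix_mulVec_extendXA_apply_xa, hf, hfn]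
  ring

theorem card_centralIndices : (centralIndices n).card = 2 :=
  Finset.card_pair natCast_ne_zero.symm

theorem sum_ite_mem_centralIndices (x y : ℝ) :
    ∑ k : ZMod (2 * n), (if k ∈ centralIndices n then x else y) = 2 * x + (2 * n - 2) * y := by
  rw [Finset.sum_ite, Finset.sum_const, Finset.sum_const, Finset.filter_mem_eq_inter,
    Finset.univ_inter, Finset.filter_notMem_eq_sdiff, ← Finset.compl_eq_univ_sdiff,
    Finset.card_compl, ZMod.card, card_centralIndices, nsmul_eq_mul, nsmul_eq_mul,
    Nat.cast_sub (by have := NeZero.pos n; omega)]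
  push_cast
  ring

theorem sum_centralIndices_ite_mem (x y : ℝ) :
    ∑ k ∈ centralIndices n, (if k ∈ centralIndices n then x else y) = 2 * x := by
  rw [Finset.sum_ite_of_true (fun _ hk => hk), Finset.sum_const, card_centralIndices, nsmul_eq_mul]
  norm_num

theorem distMatrix_mulVec_cellVec (j : Fin 3) :
    𝐃 *ᵥ cellVec n j = ∑ i, quotientMatrix n i j • cellVec n i := by
  ext (k | k) <;> fin_cases j <;>
    simp [cellVec, quotientMatrix, Fin.sum_univ_three, distMatrix_mulVec_extendA_apply_a,
      distMatrix_mulVec_extendA_apply_xa, distMatrix_mulVec_extendXA_apply_a,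
      distMatrix_mulVec_extendXA_apply_xa, sum_ite_mem_centralIndices,
      sum_centralIndices_ite_mem, ZMod.card, card_centralIndices] <;>
    (try split_ifs) <;> ring

-- One index out of each pair `{i, i + n}`.
variable (n) in
def pairRepresentatives : Finset (ZMod (2 * n)) := Finset.univ.filter (·.val < n)

theorem add_natCast_mem_pairRepresentatives {k : ZMod (2 * n)} :
    k + 𝐧 ∈ pairRepresentatives n ↔ k ∉ pairRepresentatives n := by
  have hk := ZMod.val_lt k
  have hn : (𝐧).val = n := ZMod.val_natCast_of_lt (by have := NeZero.pos n; omega)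
  simp only [pairRepresentatives, Finset.mem_filter, Finset.mem_univ, true_and, ZMod.val_add, hn]
  by_cases h : k.val < n
  · rw [Nat.mod_eq_of_lt (by omega)]; omega
  · rw [Nat.mod_eq_sub_mod (by omega), Nat.mod_eq_of_lt (by omega)]; omega

theorem zero_mem_pairRepresentatives : (0 : ZMod (2 * n)) ∈ pairRepresentatives n := by
  simp [pairRepresentatives, NeZero.pos n]

theorem card_pairRepresentatives : (pairRepresentatives n).card = n := by
  have hcompl : (pairRepresentatives n)ᶜ = (pairRepresentatives n).image (· + 𝐧) := by
    ext k
    rw [Finset.mem_compl, Finset.mem_image]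
    constructor
    · exact fun hk => ⟨k + 𝐧, add_natCast_mem_pairRepresentatives.mpr hk, add_natCast_add_natCast k⟩
    · rintro ⟨i, hi, rfl⟩
      exact fun h => add_natCast_mem_pairRepresentatives.mp h hi
  have := Finset.card_compl (pairRepresentatives n)
  rw [hcompl, Finset.card_image_of_injective _ (add_left_injective _), ZMod.card] at this
  omega

theorem sum_pairVec : ∑ i ∈ pairRepresentatives n, pairVec i = 1 := by
  ext k
  simp only [pairVec, Finset.sum_apply, Pi.add_apply, Finset.sum_add_distrib,
    ← single_apply_add_natCast, Finset.sum_pi_single, add_natCast_mem_pairRepresentatives]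
  split_ifs <;> simp

variable (n) in
abbrev IndexNegOne : Type :=
  {j // j ∈ (centralIndices n)ᶜ.erase 1} ⊕ Unit ⊕ {i // i ∈ pairRepresentatives n}

variable (n) in
abbrev IndexNegThree : Type := {p // p ∈ (pairRepresentatives n).erase 0}

variable (n) in
noncomputable def spanningFamily :
    (IndexNegOne n ⊕ IndexNegThree n) ⊕ Fin 3 → QuaternionGroup n → ℝ
  | .inl (.inl (.inl j)) => extendA (Pi.single j.1 1 - Pi.single 1 1)
  | .inl (.inl (.inr (.inl _))) => extendA (Pi.single 0 1 - Pi.single 𝐧 1)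
  | .inl (.inl (.inr (.inr i))) => extendXA (Pi.single i.1 1 - Pi.single (i.1 + 𝐧) 1)
  | .inl (.inr p) => extendXA (pairVec p.1 - pairVec 0)
  | .inr t => cellVec n t


theorem card_indexNegOne (hn : 2 ≤ n) : Fintype.card (IndexNegOne n) = 3 * n - 2 := by
  simp only [Fintype.card_sum, Fintype.card_coe, Fintype.card_unit,
    Finset.card_erase_of_mem (Finset.mem_compl.mpr (one_notMem_centralIndices hn)),
    Finset.card_compl, ZMod.card, card_centralIndices, card_pairRepresentatives]
  omega

theorem card_indexNegThree : Fintype.card (IndexNegThree n) = n - 1 := by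
  simp [Finset.card_erase_of_mem zero_mem_pairRepresentatives, card_pairRepresentatives]

theorem distMatrix_mulVec_spanningFamily_inl (hn : 2 ≤ n) (e : IndexNegOne n ⊕ IndexNegThree n) :
    𝐃 *ᵥ spanningFamily n (.inl e)
      = Sum.elim (fun _ => (-1 : ℝ)) (fun _ => -3) e • spanningFamily n (.inl e) := by
  have h1 := one_notMem_centralIndices hn
  rcases e with ((⟨j, hj⟩ | _ | ⟨i, -⟩) | ⟨p, -⟩) <;>
    simp only [spanningFamily, Sum.elim_inl, Sum.elim_inr]
  · obtain ⟨-, hj⟩ := Finset.mem_erase.mp hj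
    rw [Finset.mem_compl] at hj
    apply distMatrix_mulVec_extendA_of_sum_eq_zero <;>
      simp [Finset.sum_sub_distrib, Finset.sum_pi_single', hj, h1]
  · apply distMatrix_mulVec_extendA_of_sum_eq_zero <;>
      simp [Finset.sum_sub_distrib, Finset.sum_pi_single', mem_centralIndices]
  · convert distMatrix_mulVec_extendXA_of_sum_eq_zero (c := -1) ?_ ?_ using 2
    · norm_num
    · simp [Finset.sum_sub_distrib]
    · intro k
      simp [single_apply_add_natCast, add_natCast_add_natCast]
  · convert distMatrix_mulVec_extendXA_of_sum_eq_zero (c := 1) ?_ ?_ using 2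
    · norm_num
    · simp [pairVec, Finset.sum_sub_distrib, Finset.sum_add_distrib]
    · intro k
      simp [pairVec, single_apply_add_natCast, add_natCast_add_natCast, natCast_add_natCast]
      ring

theorem top_le_span_spanningFamily (hn : 2 ≤ n) :
    ⊤ ≤ Submodule.span ℝ (Set.range (spanningFamily n)) := by
  set W := Submodule.span ℝ (Set.range (spanningFamily n))
  have hmem (x) : spanningFamily n x ∈ W := Submodule.subset_span ⟨x, rfl⟩
  have hind (s : Finset (ZMod (2 * n))) :
      ∑ j ∈ s, (Pi.single j 1 : ZMod (2 * n) → ℝ) = fun k => if k ∈ s then 1 else 0 := by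
    ext k
    simp [Finset.sum_apply, Finset.sum_pi_single]
  have hA (k : ZMod (2 * n)) : extendA (Pi.single k 1) ∈ W := by
    by_cases hk : k ∈ centralIndices n
    · refine W.mem_of_sub_mem_of_sum_mem (v := fun k => extendA (Pi.single k 1))
        (r := 0) (by simp [mem_centralIndices]) (fun j hj => ?_) ?_ hk
      · rcases (mem_centralIndices.mp hj) with rfl | rfl
        · simp
        · simpa [spanningFamily] using W.neg_mem (hmem (.inl (.inl (.inr (.inl ())))))
      · simpa [← map_sum, hind, spanningFamily, cellVec] using hmem (.inr 0)
    · have h1 := Finset.mem_compl.mpr (one_notMem_centralIndices hn)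
      refine W.mem_of_sub_mem_of_sum_mem (v := fun k => extendA (Pi.single k 1))
        h1 (fun j hj => ?_) ?_ (Finset.mem_compl.mpr hk)
      · by_cases hj1 : j = 1
        · simp [hj1]
        · simpa [spanningFamily] using
            hmem (.inl (.inl (.inl ⟨j, Finset.mem_erase.mpr ⟨hj1, hj⟩⟩)))
      · simpa [← map_sum, hind, spanningFamily, cellVec] using hmem (.inr 1)
  have hpair {i : ZMod (2 * n)} (hi : i ∈ pairRepresentatives n) : extendXA (pairVec i) ∈ W := by
    refine W.mem_of_sub_mem_of_sum_mem (v := fun i => extendXA (pairVec i))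
      zero_mem_pairRepresentatives (fun j hj => ?_) ?_ hi
    · by_cases hj0 : j = 0
      · simp [hj0]
      · simpa [spanningFamily] using hmem (.inl (.inr ⟨j, Finset.mem_erase.mpr ⟨hj0, hj⟩⟩))
    · simpa [← map_sum, sum_pairVec, spanningFamily, cellVec] using hmem (.inr 2)
  have hXA {i : ZMod (2 * n)} (hi : i ∈ pairRepresentatives n) {k : ZMod (2 * n)}
      (hk : k ∈ ({i, i + 𝐧} : Finset _)) : extendXA (Pi.single k 1) ∈ W := by
    refine W.mem_of_sub_mem_of_sum_mem (v := fun k => extendXA (Pi.single k 1))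
      (Finset.mem_insert_self i _) (fun j hj => ?_) ?_ hk
    · rcases Finset.mem_insert.mp hj with rfl | hj
      · simp
      · rw [Finset.mem_singleton.mp hj]
        simpa [spanningFamily] using W.neg_mem (hmem (.inl (.inl (.inr (.inr ⟨i, hi⟩)))))
    · simpa [Finset.sum_pair (self_ne_add_natCast i), pairVec] using hpair hi
  rw [← (Pi.basisFun ℝ (QuaternionGroup n)).span_eq, Submodule.span_le]
  rintro _ ⟨g | g, rfl⟩
  · simpa [extendA_single] using hA g
  · by_cases hg : g ∈ pairRepresentatives n
    · simpa [extendXA_single] using hXA hg (Finset.mem_insert_self g _)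
    · have hg' := add_natCast_mem_pairRepresentatives.mpr hg
      simpa [extendXA_single, add_natCast_add_natCast] using
        hXA hg' (Finset.mem_insert_of_mem (Finset.mem_singleton_self _))

theorem charpoly_distMatrix_enhancedPowerGraph (hn : 2 ≤ n) :
    𝐃.charpoly = (X + C 1) ^ (3 * n - 2) * (X + C 3) ^ (n - 1) *
      (X ^ 3 - C (6 * (n : ℝ) - 5) * X ^ 2 - C (8 * (n : ℝ) ^ 2 + 4 * n - 7) * X
        - C (6 * (n : ℝ) - 3)) := by
  rw [Matrix.charpoly_eq_prod_mul_charpoly_of_span _ (spanningFamily n)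
    (top_le_span_spanningFamily hn) ?_ _ (quotientMatrix n)
    (distMatrix_mulVec_spanningFamily_inl hn) distMatrix_mulVec_cellVec,
    charpoly_quotientMatrix, Fintype.prod_sum_type]
  · simp only [Sum.elim_inl, Sum.elim_inr, Finset.prod_const, Finset.card_univ,
      card_indexNegOne hn, card_indexNegThree, map_neg, sub_neg_eq_add]
  · simp only [Fintype.card_sum, card_indexNegOne hn, card_indexNegThree, Fintype.card_fin,
      QuaternionGroup.card]
    omega

end QuaternionGroup

theorem stmt8 (n : ℕ) [NeZero n] (hn : 3 ≤ n) :
    (distMatrix (enhancedPowerGraph (QuaternionGroup n))).charpoly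
      = (X + C 1) ^ (3 * n - 2) * (X + C 3) ^ (n - 1) *
        (X ^ 3 - C (6 * (n : ℝ) - 5) * X ^ 2
          - C (8 * (n : ℝ) ^ 2 + 4 * n - 7) * X
          - C (6 * (n : ℝ) - 3)) ∧
    (distMatrix (enhancedPowerGraph (QuaternionGroup n))).det ≠ 0 := by
  have hchar := QuaternionGroup.charpoly_distMatrix_enhancedPowerGraph (n := n) (by omega)
  refine ⟨hchar, ?_⟩
  rw [Matrix.det_eq_sign_charpoly_coeff, hchar, coeff_zero_eq_eval_zero]
  have : (3 : ℝ) ≤ n := by exact_mod_cast hn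
  simp
  linarith
end

section
/- Let G = El(pⁿ) × Z_m with n ≥ 2, p prime, and gcd(m, p) = 1, and let α = (pⁿ − 1)/(p − 1). Then the characteristic polynomial of the distance matrix of the enhanced power graph of G equals (x + mp − m + 1)^{α−1} (x + 1)^{(mp−m−1)α + m − 1} (x² + (mp + 2 − 2mpⁿ)x + m²(pⁿ − p) − 2mpⁿ + mp + 1). -/
open Polynomial

/-!
In `E × C`, with `E` of exponent `p` and `C` cyclic of order prime to `p`, two distinct elements
lie in a common cyclic subgroup iff one of them has trivial first coordinate or their first
coordinates generate the same subgroup of order `p` (then both lie in the cyclic group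
`⟨x⟩ × C`). Since `1` is adjacent to everything, all distances are `0`, `1` or `2`, and the
enhanced power graph is the join of the clique `1 × C` (`a = m` vertices) with one clique of
`b = (p - 1) m` vertices for each of the `α` subgroups of order `p` of `El(pⁿ)`.

For such a join, with `P` the indicator matrix of the `α` cliques and `S` that of the two sides,
`xI - D = (x + 1) I + P Pᵀ - S K Sᵀ` with `K = !![1, 1; 1, 2]`. The matrix
`M = (x + 1) I + P Pᵀ` scales the two columns of `S` by `x + 1` and `x + 1 + b`, so the
Weinstein–Aronszajn identity reduces `det (M - S K Sᵀ)` to `det M = (x + 1) ^ (|V| - α) (x + 1 + b) ^ α`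
times a `2 × 2` determinant, which produces the quadratic factor.
-/

open Matrix Subgroup

section JoinCliques

variable {V ι : Type*}

/-- The distance matrix of the join of the clique `c⁻¹ none` with the cliques `c⁻¹ (some i)`. -/
def joinCliquesDistMatrix [DecidableEq V] [DecidableEq ι] (c : V → Option ι) : Matrix V V ℝ :=
  of fun u v => if u = v then 0 else if c u = none ∨ c v = none ∨ c u = c v then 1 else 2

def cliqueIndicator [DecidableEq ι] (c : V → Option ι) : Matrix V ι ℝ :=
  of fun v i => if c v = some i then 1 else 0

def sideIndicator (c : V → Option ι) : Matrix V (Fin 2) ℝ :=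
  of fun v => ![if c v = none then 1 else 0, if c v ≠ none then 1 else 0]

theorem sum_ite_mul_ite_eq_card [Fintype V] (P Q : V → Prop) [DecidablePred P] [DecidablePred Q] :
    ∑ v, (if P v then 1 else 0 : ℝ) * (if Q v then 1 else 0) = Nat.card {v // P v ∧ Q v} := by
  simp_rw [ite_zero_mul_ite_zero, mul_one]
  rw [Finset.sum_boole, Nat.card_eq_fintype_card, Fintype.card_subtype]

variable {c : V → Option ι} {a b : ℕ} (ha : Nat.card {v // c v = none} = a)
  (hb : ∀ i, Nat.card {v // c v = some i} = b)

include ha hb in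
theorem card_eq_add_card_mul [Finite V] [Finite ι] : Nat.card V = a + Nat.card ι * b := by
  have := Fintype.ofFinite ι
  rw [← Nat.card_congr (Equiv.sigmaFiberEquiv c), Nat.card_sigma, Fintype.sum_option, ha]
  simp [hb]

theorem cliqueIndicator_mul_transpose_apply [Fintype ι] [DecidableEq ι] (u v : V) :
    (cliqueIndicator c * (cliqueIndicator c)ᵀ) u v
      = if c u ≠ none ∧ c u = c v then 1 else 0 := by
  rcases hu : c u with _ | i
  · simp [mul_apply, cliqueIndicator, hu]
  · simp only [mul_apply, cliqueIndicator, transpose_apply, of_apply, hu, Option.some.injEq,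
      boole_mul, Finset.sum_ite_eq, Finset.mem_univ, if_true]
    simp [eq_comm]

include hb in
theorem transpose_cliqueIndicator_mul_self [Fintype V] [DecidableEq ι] :
    (cliqueIndicator c)ᵀ * cliqueIndicator c = (b : ℝ) • 1 := by
  ext i j
  simp only [mul_apply, cliqueIndicator, transpose_apply, of_apply, sum_ite_mul_ite_eq_card]
  by_cases hij : i = j
  · simp only [hij, and_self, hb]
    simp
  · have : IsEmpty {v // c v = some i ∧ c v = some j} :=
      ⟨fun v => hij (by simpa using v.2.1.symm.trans v.2.2)⟩
    simp [hij]

include hb in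
theorem transpose_cliqueIndicator_mul_sideIndicator [Fintype V] [DecidableEq ι] :
    (cliqueIndicator c)ᵀ * sideIndicator c = of fun _ => ![0, (b : ℝ)] := by
  have hdisj (i : ι) : IsEmpty {v // c v = some i ∧ c v = none} :=
    ⟨fun v => by simpa [v.2.2] using v.2.1⟩
  ext i j
  fin_cases j <;>
    simp only [mul_apply, sideIndicator, cliqueIndicator, transpose_apply, of_apply, Fin.zero_eta,
      Fin.mk_one, cons_val_zero, cons_val_one, sum_ite_mul_ite_eq_card]
  · simp
  · have hsome (v : V) : c v = some i ∧ c v ≠ none ↔ c v = some i :=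
      and_iff_left_of_imp fun h => by simp [h]
    rw [Nat.card_congr (Equiv.subtypeEquivRight hsome), hb]

include ha hb in
theorem transpose_sideIndicator_mul_self [Fintype V] [Finite ι] :
    (sideIndicator c)ᵀ * sideIndicator c = !![(a : ℝ), 0; 0, (Nat.card ι * b : ℕ)] := by
  have hside : Nat.card {v // c v ≠ none ∧ c v ≠ none} = Nat.card ι * b := by
    simp only [and_self, Nat.card_eq_fintype_card, Fintype.card_subtype_compl]
    rw [← Nat.card_eq_fintype_card, ← Nat.card_eq_fintype_card, ha, card_eq_add_card_mul ha hb,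
      Nat.add_sub_cancel_left]
  have hdisj : IsEmpty {v // c v = none ∧ c v ≠ none} := ⟨fun v => v.2.2 v.2.1⟩
  ext i j
  fin_cases i <;> fin_cases j <;>
    simp only [mul_apply, sideIndicator, transpose_apply, of_apply, Fin.zero_eta, Fin.mk_one,
      cons_val_zero, cons_val_one, sum_ite_mul_ite_eq_card]
  · simp only [and_self, ha]
  · simp
  · simp [and_comm]
  · rw [hside]

include hb in
theorem smul_one_add_cliqueIndicator_mul_transpose_mul_sideIndicator [Fintype V] [DecidableEq V]
    [Fintype ι] [DecidableEq ι] (t : ℝ) :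
    (t • 1 + cliqueIndicator c * (cliqueIndicator c)ᵀ) * sideIndicator c
      = sideIndicator c * !![t, 0; 0, t + b] := by
  rw [Matrix.add_mul, Matrix.smul_mul, Matrix.one_mul, Matrix.mul_assoc,
    transpose_cliqueIndicator_mul_sideIndicator hb]
  ext u j
  fin_cases j <;> simp [mul_apply, sideIndicator, cliqueIndicator]
  rcases c u with _ | i <;> simp

include hb in
theorem det_smul_one_add_cliqueIndicator_mul_transpose [Fintype V] [DecidableEq V] [Fintype ι]
    [DecidableEq ι] {t : ℝ} (ht : t ≠ 0) :
    (t • 1 + cliqueIndicator c * (cliqueIndicator c)ᵀ).det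
      = t ^ Fintype.card V * (1 + b / t) ^ Fintype.card ι := by
  have : t • 1 + cliqueIndicator c * (cliqueIndicator c)ᵀ
      = t • (1 + (t⁻¹ • cliqueIndicator c) * (cliqueIndicator c)ᵀ) := by
    rw [smul_add, Matrix.smul_mul, smul_smul, mul_inv_cancel₀ ht, one_smul]
  rw [this, det_smul, det_one_add_mul_comm, Matrix.mul_smul, transpose_cliqueIndicator_mul_self hb,
    smul_smul, show (1 : Matrix ι ι ℝ) + (t⁻¹ * b) • 1 = (1 + b / t) • 1 by
      rw [add_smul, one_smul, div_eq_inv_mul], det_smul, det_one, mul_one]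

theorem scalar_sub_joinCliquesDistMatrix [Fintype V] [DecidableEq V] [Fintype ι] [DecidableEq ι]
    (x : ℝ) :
    scalar V x - joinCliquesDistMatrix c
      = (x + 1) • 1 + cliqueIndicator c * (cliqueIndicator c)ᵀ
        - sideIndicator c * !![(1 : ℝ), 1; 1, 2] * (sideIndicator c)ᵀ := by
  ext u v
  rw [Matrix.sub_apply, Matrix.sub_apply, Matrix.add_apply, cliqueIndicator_mul_transpose_apply]
  simp only [Matrix.smul_apply, scalar_apply, diagonal_apply, one_apply, mul_apply,
    Fin.sum_univ_two, sideIndicator, joinCliquesDistMatrix, transpose_apply, of_apply]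
  by_cases huv : u = v
  · subst huv
    cases c u <;> simp; ring
  · cases c u <;> cases c v <;> simp [huv]
    split_ifs <;> norm_num

include ha hb in
theorem eval_charpoly_joinCliquesDistMatrix [Fintype V] [DecidableEq V] [Fintype ι]
    [DecidableEq ι] {x : ℝ} (ht : x + 1 ≠ 0) (htb : x + 1 + b ≠ 0) :
    (joinCliquesDistMatrix c).charpoly.eval x
      = (x + 1) ^ Fintype.card V * (1 + b / (x + 1)) ^ Fintype.card ι
        * ((1 - a / (x + 1)) * (1 - 2 * (Nat.card ι * b) / (x + 1 + b))
          - (Nat.card ι * b) / (x + 1 + b) * (a / (x + 1))) := by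
  set M := (x + 1) • 1 + cliqueIndicator c * (cliqueIndicator c)ᵀ
  set Y := sideIndicator c * !![(x + 1)⁻¹, 0; 0, (x + 1 + b)⁻¹]
  have hMY : M * Y = sideIndicator c := by
    rw [← Matrix.mul_assoc, smul_one_add_cliqueIndicator_mul_transpose_mul_sideIndicator hb,
      Matrix.mul_assoc, mul_fin_two, mul_inv_cancel₀ ht, mul_inv_cancel₀ htb]
    simp [← one_fin_two]
  have hfactor : scalar V x - joinCliquesDistMatrix c
      = M * (1 - Y * (!![(1 : ℝ), 1; 1, 2] * (sideIndicator c)ᵀ)) := by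
    rw [scalar_sub_joinCliquesDistMatrix, Matrix.mul_sub, Matrix.mul_one, ← Matrix.mul_assoc, hMY,
      Matrix.mul_assoc]
  rw [eval_charpoly, hfactor, det_mul, det_smul_one_add_cliqueIndicator_mul_transpose hb ht,
    det_one_sub_mul_comm, Matrix.mul_assoc, ← Matrix.mul_assoc _ (sideIndicator c),
    transpose_sideIndicator_mul_self ha hb, det_fin_two]
  congr 1
  simp
  ring

include ha hb in
theorem charpoly_joinCliquesDistMatrix [Fintype V] [DecidableEq V] [Finite ι] [DecidableEq ι]
    {k : ℕ} (hk : Nat.card ι = k) (ha0 : 0 < a) (hb0 : 0 < b) (hk0 : 0 < k) :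
    (joinCliquesDistMatrix c).charpoly
      = (X + C ((b : ℝ) + 1)) ^ (k - 1) * (X + C 1) ^ ((b - 1) * k + a - 1)
        * (X ^ 2 + C (2 + b - a - 2 * k * b : ℝ) * X
          + C ((1 - a) * (1 + b - 2 * k * b) - a * k * b : ℝ)) := by
  have := Fintype.ofFinite ι
  obtain ⟨a, rfl⟩ := Nat.exists_eq_add_one_of_ne_zero ha0.ne'
  obtain ⟨b, rfl⟩ := Nat.exists_eq_add_one_of_ne_zero hb0.ne'
  obtain ⟨k, rfl⟩ := Nat.exists_eq_add_one_of_ne_zero hk0.ne'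
  have hV : Fintype.card V = (b * (k + 1) + a) + (k + 1) + 1 := by
    rw [← Nat.card_eq_fintype_card, card_eq_add_card_mul ha hb, hk]; ring
  apply eq_of_infinite_eval_eq
  refine Set.Infinite.mono (s := {-1, -1 - (b + 1 : ℝ)}ᶜ) (fun x hx => ?_)
    (Set.toFinite _).infinite_compl
  simp only [Set.mem_compl_iff, Set.mem_insert_iff, Set.mem_singleton_iff, not_or] at hx
  have ht : x + 1 ≠ 0 := fun h => hx.1 (by linarith)
  have htb : x + 1 + (b + 1 : ℕ) ≠ 0 := fun h => hx.2 (by push_cast at h; linarith)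
  change eval x _ = eval x _
  rw [eval_charpoly_joinCliquesDistMatrix ha hb ht htb, hV, ← Nat.card_eq_fintype_card, hk]
  simp only [eval_mul, eval_pow, eval_add, eval_X, eval_C, Nat.add_sub_cancel,
    show b * (k + 1) + (a + 1) - 1 = b * (k + 1) + a by omega]
  push_cast at htb ⊢
  rw [show 1 + ((b : ℝ) + 1) / (x + 1) = (x + 1 + (b + 1)) / (x + 1) by field_simp, div_pow,
    pow_add, pow_succ, pow_succ _ k, show x + ((b : ℝ) + 1 + 1) = x + 1 + (b + 1) by ring]
  field_simp
  ring

end JoinCliques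

section ExponentPrime

variable {E : Type*} [Group E] {p : ℕ} [Fact p.Prime] (hE : ∀ x : E, x ^ p = 1)
include hE

theorem card_zpowers_of_pow_prime_eq_one {x : E} (hx : x ≠ 1) : Nat.card (zpowers x) = p := by
  rw [Nat.card_zpowers, orderOf_eq_prime (hE x) hx]

theorem zpowers_eq_of_pow_prime_eq_one {x : E} {H : Subgroup E} (hH : Nat.card H = p)
    (hx : x ≠ 1) (hxH : x ∈ H) : zpowers x = H := by
  have : Finite H := Nat.finite_of_card_ne_zero (hH ▸ (Fact.out : p.Prime).ne_zero)
  refine eq_of_le_of_card_ge (zpowers_le.2 hxH) ?_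
  rw [hH, card_zpowers_of_pow_prime_eq_one hE hx]

variable [DecidableEq E]

def lineLabel (x : E) : Option {H : Subgroup E // Nat.card H = p} :=
  if h : x = 1 then none else some ⟨zpowers x, card_zpowers_of_pow_prime_eq_one hE h⟩

theorem lineLabel_eq_none_iff {x : E} : lineLabel hE x = none ↔ x = 1 := by
  unfold lineLabel
  split_ifs with h <;> simp [h]

theorem lineLabel_eq_some_iff {x : E} {H : {H : Subgroup E // Nat.card H = p}} :
    lineLabel hE x = some H ↔ x ∈ (H : Subgroup E) ∧ x ≠ 1 := by
  unfold lineLabel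
  split_ifs with h
  · simp [h]
  · rw [Option.some.injEq, Subtype.ext_iff]
    exact ⟨fun hH => ⟨hH ▸ mem_zpowers x, h⟩,
      fun hH => zpowers_eq_of_pow_prime_eq_one hE H.2 h hH.1⟩

theorem lineLabel_eq_lineLabel_iff {x y : E} (hx : x ≠ 1) (hy : y ≠ 1) :
    lineLabel hE x = lineLabel hE y ↔ zpowers x = zpowers y := by
  simp [lineLabel, hx, hy]

theorem card_lineLabel_eq_none : Nat.card {x // lineLabel hE x = none} = 1 := by
  rw [Nat.card_congr (Equiv.subtypeEquivRight fun x => lineLabel_eq_none_iff hE), Nat.card_unique]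

theorem card_lineLabel_eq_some (H : {H : Subgroup E // Nat.card H = p}) :
    Nat.card {x // lineLabel hE x = some H} = p - 1 := by
  rw [Nat.card_congr (Equiv.subtypeEquivRight fun x => lineLabel_eq_some_iff hE)]
  obtain ⟨H, hH⟩ := H
  have : Finite H := Nat.finite_of_card_ne_zero (hH.symm ▸ (Fact.out : p.Prime).ne_zero)
  change Nat.card {x // x ∈ H ∧ x ≠ 1} = p - 1
  rw [← hH, ← SetLike.coe_sort_coe, Nat.card_coe_set_eq,
    ← Set.ncard_sdiff_singleton_of_mem (one_mem H), ← Nat.card_coe_set_eq]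
  rfl

theorem card_eq_one_add_card_prime_subgroups_mul [Finite E] :
    Nat.card E = 1 + Nat.card {H : Subgroup E // Nat.card H = p} * (p - 1) :=
  card_eq_add_card_mul (card_lineLabel_eq_none hE) (card_lineLabel_eq_some hE)

end ExponentPrime

section EnhancedPowerGraph

variable {G : Type*} [Group G]

theorem enhancedPowerGraph_adj_of_mem {K : Subgroup G} [IsCyclic K] {u v : G} (huv : u ≠ v)
    (hu : u ∈ K) (hv : v ∈ K) : (enhancedPowerGraph G).Adj u v := by
  obtain ⟨g, rfl⟩ := K.isCyclic_iff_exists_zpowers_eq_top.1 ‹_›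
  exact ⟨huv, g, hu, hv⟩

theorem enhancedPowerGraph_adj_one_s14 {v : G} (hv : v ≠ 1) : (enhancedPowerGraph G).Adj v 1 :=
  ⟨hv, v, mem_zpowers v, one_mem _⟩

theorem enhancedPowerGraph_dist_eq_two {u v : G} (huv : u ≠ v)
    (hadj : ¬ (enhancedPowerGraph G).Adj u v) : (enhancedPowerGraph G).dist u v = 2 := by
  have hu : u ≠ 1 := by
    rintro rfl
    exact hadj (enhancedPowerGraph_adj_one_s14 huv.symm).symm
  have hv : v ≠ 1 := by
    rintro rfl
    exact hadj (enhancedPowerGraph_adj_one_s14 huv)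
  have hle : (enhancedPowerGraph G).dist u v ≤ 2 := by
    simpa using SimpleGraph.dist_le ((enhancedPowerGraph_adj_one_s14 hu).toWalk.append
      (enhancedPowerGraph_adj_one_s14 hv).symm.toWalk)
  have hpos : 0 < (enhancedPowerGraph G).dist u v :=
    ((enhancedPowerGraph_adj_one_s14 hu).reachable.trans
      (enhancedPowerGraph_adj_one_s14 hv).symm.reachable).pos_dist_of_ne huv
  have hne : (enhancedPowerGraph G).dist u v ≠ 1 := mt SimpleGraph.dist_eq_one_iff_adj.1 hadj
  omega

end EnhancedPowerGraph

theorem card_subtype_comp_fst {α β γ : Type*} (f : α → γ) (y : γ) :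
    Nat.card {g : α × β // (f ∘ Prod.fst) g = y} = Nat.card {x // f x = y} * Nat.card β :=
  (Nat.card_congr (Equiv.prodSubtypeFstEquivSubtypeProd (p := (f · = y)))).trans (Nat.card_prod _ _)

section Product

variable {E C : Type*} [Group E] [Group C]

theorem isCyclic_zpowers_prod_top [IsCyclic C] {p : ℕ} (hE : ∀ x : E, x ^ p = 1)
    (hC : (Nat.card C).Coprime p) (x : E) :
    IsCyclic ((zpowers x).prod (⊤ : Subgroup C)) := by
  refine (prodEquiv _ _).isCyclic.2 (Group.isCyclic_prod_iff.2 ⟨inferInstance,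
    topEquiv.isCyclic.2 ‹_›, ?_⟩)
  rw [Nat.card_zpowers, card_top]
  exact hC.symm.coprime_dvd_left (orderOf_dvd_of_pow_eq_one (hE x))

theorem enhancedPowerGraph_prod_adj_iff [IsCyclic C] {p : ℕ} [Fact p.Prime]
    (hE : ∀ x : E, x ^ p = 1) (hC : (Nat.card C).Coprime p)
    {u v : E × C} (huv : u ≠ v) :
    (enhancedPowerGraph (E × C)).Adj u v ↔ u.1 = 1 ∨ v.1 = 1 ∨ zpowers u.1 = zpowers v.1 := by
  constructor
  · rintro ⟨-, w, hu, hv⟩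
    have fst_mem {g : E × C} (hg : g ∈ zpowers w) : g.1 ∈ zpowers w.1 := by
      obtain ⟨j, rfl⟩ := mem_zpowers_iff.1 hg
      exact ⟨j, by simp⟩
    by_cases hu1 : u.1 = 1
    · exact Or.inl hu1
    by_cases hv1 : v.1 = 1
    · exact Or.inr (Or.inl hv1)
    have hw : Nat.card (zpowers w.1) = p := by
      refine card_zpowers_of_pow_prime_eq_one hE fun hw1 => hu1 ?_
      simpa [hw1] using fst_mem hu
    rw [zpowers_eq_of_pow_prime_eq_one hE hw hu1 (fst_mem hu),
      zpowers_eq_of_pow_prime_eq_one hE hw hv1 (fst_mem hv)]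
    exact Or.inr (Or.inr rfl)
  · intro h
    suffices ∃ x : E, u.1 ∈ zpowers x ∧ v.1 ∈ zpowers x by
      obtain ⟨x, hux, hvx⟩ := this
      have := isCyclic_zpowers_prod_top hE hC x
      exact enhancedPowerGraph_adj_of_mem huv (mem_prod.2 ⟨hux, mem_top _⟩)
        (mem_prod.2 ⟨hvx, mem_top _⟩)
    rcases h with h | h | h
    · exact ⟨v.1, h ▸ one_mem _, mem_zpowers _⟩
    · exact ⟨u.1, mem_zpowers _, h ▸ one_mem _⟩
    · exact ⟨u.1, mem_zpowers _, h ▸ mem_zpowers _⟩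

open Classical in
theorem distMatrix_enhancedPowerGraph_prod [DecidableEq E] [DecidableEq C] [IsCyclic C] {p : ℕ}
    [Fact p.Prime] (hE : ∀ x : E, x ^ p = 1)
    (hC : (Nat.card C).Coprime p) :
    distMatrix (enhancedPowerGraph (E × C)) = joinCliquesDistMatrix (lineLabel hE ∘ Prod.fst) := by
  ext u v
  simp only [distMatrix, joinCliquesDistMatrix, of_apply, Function.comp_apply]
  by_cases huv : u = v
  · simp [huv]
  have hadj : (lineLabel hE u.1 = none ∨ lineLabel hE v.1 = none
      ∨ lineLabel hE u.1 = lineLabel hE v.1) ↔ (enhancedPowerGraph (E × C)).Adj u v := by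
    rw [enhancedPowerGraph_prod_adj_iff hE hC huv, lineLabel_eq_none_iff, lineLabel_eq_none_iff]
    by_cases hu : u.1 = 1
    · simp [hu]
    by_cases hv : v.1 = 1
    · simp [hv]
    simp [hu, hv, lineLabel_eq_lineLabel_iff hE hu hv]
  rw [if_neg huv]
  split_ifs with h
  · rw [SimpleGraph.dist_eq_one_iff_adj.2 (hadj.1 h), Nat.cast_one]
  · rw [enhancedPowerGraph_dist_eq_two huv (mt hadj.2 h), Nat.cast_ofNat]

end Product

theorem El.pow_eq_one {p n : ℕ} [NeZero p] (x : El p n) : x ^ p = 1 :=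
  Multiplicative.toAdd.injective <| by ext i; simp

theorem El.card_prime_subgroups {p n α : ℕ} [Fact p.Prime] (hα : (p - 1) * α = p ^ n - 1) :
    Nat.card {H : Subgroup (El p n) // Nat.card H = p} = α := by
  have h := card_eq_one_add_card_prime_subgroups_mul (El.pow_eq_one (p := p) (n := n))
  rw [show Nat.card (El p n) = p ^ n by simp, add_comm] at h
  refine Nat.eq_of_mul_eq_mul_left (Nat.sub_pos_of_lt (Fact.out : p.Prime).one_lt) ?_
  rw [hα, mul_comm, h, Nat.add_sub_cancel]

theorem stmt14_general (p n m α : ℕ) [NeZero p] [NeZero m] (hp : p.Prime) (hn : 2 ≤ n)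
    (hgcd : Nat.gcd m p = 1) (hα : (p - 1) * α = p ^ n - 1) :
    (distMatrix (enhancedPowerGraph (El p n × Multiplicative (ZMod m)))).charpoly
      = (X + C ((m : ℝ) * p - m + 1)) ^ (α - 1)
        * (X + C 1) ^ ((m * p - m - 1) * α + m - 1)
        * (X ^ 2 + C ((m : ℝ) * p + 2 - 2 * m * p ^ n) * X
            + C ((m : ℝ) ^ 2 * ((p : ℝ) ^ n - p) - 2 * m * p ^ n + m * p + 1)) := by
  classical
  have : Fact p.Prime := ⟨hp⟩
  have hE : ∀ x : El p n, x ^ p = 1 := El.pow_eq_one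
  have hC : Nat.card (Multiplicative (ZMod m)) = m := by simp
  have hα0 : 0 < α := Nat.pos_of_ne_zero fun h0 => by
    rw [h0, mul_zero] at hα
    have := Nat.one_lt_pow (by omega : n ≠ 0) hp.one_lt
    omega
  have hmp : m < m * p := lt_mul_of_one_lt_right (NeZero.pos m) hp.one_lt
  rw [distMatrix_enhancedPowerGraph_prod hE (by rwa [hC]),
    charpoly_joinCliquesDistMatrix (a := m) (b := m * p - m)
      (by rw [card_subtype_comp_fst, card_lineLabel_eq_none, hC, one_mul])
      (fun H => by rw [card_subtype_comp_fst, card_lineLabel_eq_some, hC, Nat.sub_one_mul, mul_comm])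
      (El.card_prime_subgroups hα) (NeZero.pos m) (Nat.sub_pos_of_lt hmp) hα0]
  have hbR : ((m * p - m : ℕ) : ℝ) = m * p - m := by rw [Nat.cast_sub hmp.le, Nat.cast_mul]
  have hαR : ((p : ℝ) - 1) * α = p ^ n - 1 := by
    have := congrArg (Nat.cast (R := ℝ)) hα
    push_cast [Nat.cast_sub hp.one_le, Nat.cast_sub (Nat.one_le_pow n p hp.pos)] at this
    exact this
  rw [hbR]
  congr 3
  · congr 2
    linear_combination (-2 * m : ℝ) * hαR
  · linear_combination ((m : ℝ) ^ 2 - 2 * m) * hαR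

theorem stmt14 (p n m α : ℕ) [NeZero p] [NeZero m] (hp : p.Prime) (hn : 2 ≤ n)
    (hm : 1 ≤ m) (hgcd : Nat.gcd m p = 1) (hα : (p - 1) * α = p ^ n - 1) :
    (distMatrix (enhancedPowerGraph (El p n × Multiplicative (ZMod m)))).charpoly
      = (X + C ((m : ℝ) * p - m + 1)) ^ (α - 1)
        * (X + C 1) ^ ((m * p - m - 1) * α + m - 1)
        * (X ^ 2 + C ((m : ℝ) * p + 2 - 2 * m * p ^ n) * X
            + C ((m : ℝ) ^ 2 * ((p : ℝ) ^ n - p) - 2 * m * p ^ n + m * p + 1)) :=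
  stmt14_general p n m α hp hn hgcd hα
end
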